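/- arXiv:1106.3248 — 3 statements merged into one kernel-verified Lean document; each statement's English description precedes it below -/
import Mathlib

section
/- Let Γ be a subgroup of GL(d,ℝ) acting irreducibly on a nonzero complex subspace W̃ of ℂ^d, such that every element of Γ has all eigenvalues of modulus at most C on W̃ (e.g., modulus 1). Then the matrix coefficients of the restrictions of elements of Γ to W̃ (in a fixed basis) are uniformly bounded; in particular the action of Γ on W̃ is relatively compact. -/
/-!
By Burnside's theorem the matrices `ρ γ`, `γ ∈ Γ`, of the action on `W` span the whole matrix
algebra. Since the eigenvalues are bounded by `C`, `|tr (ρ γ)| ≤ (dim W) C`; as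
`ρ γ ρ δ = ρ (γ δ)`, the linear functionals `x ↦ tr (x ρ δ)` are therefore bounded on `ρ Γ`.
The trace form is nondegenerate and the `ρ δ` span, so finitely many of these functionals
separate the points of the finite-dimensional matrix space, and hence bound every entry of `ρ γ`.
-/

open Module

section Burnside

variable {K V : Type*} [Field K] [AddCommGroup V] [Module K V]

theorem Subalgebra.isSimpleModule_of_forall_map_le [Nontrivial V] (A : Subalgebra K (End K V))
    (hirr : ∀ q : Submodule K V, (∀ a ∈ A, q.map a ≤ q) → q = ⊥ ∨ q = ⊤) :
    IsSimpleModule A V := by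
  have : Nontrivial (Submodule A V) := (Submodule.nontrivial_iff A).2 inferInstance
  refine { eq_bot_or_eq_top := fun q => ?_ }
  have hq : ∀ a ∈ A, (q.restrictScalars K).map a ≤ q.restrictScalars K := by
    rintro a ha _ ⟨x, hx, rfl⟩
    exact q.smul_mem (⟨a, ha⟩ : A) hx
  simpa using hirr _ hq

variable [IsAlgClosed K] [FiniteDimensional K V]

theorem Subalgebra.eq_top_of_isSimpleModule (A : Subalgebra K (End K V)) [IsSimpleModule A V] :
    A = ⊤ := by
  have : Module.Finite (End A V) V := Module.Finite.of_restrictScalars_finite K _ V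
  have hscalar (g : End A V) : ∃ c : K, ∀ x, g x = c • x :=
    have ⟨c, hc⟩ := (IsSimpleModule.algebraMap_end_bijective_of_isAlgClosed K).2 g
    ⟨c, fun x => by rw [← hc, Module.algebraMap_end_apply]⟩
  -- By Schur every `T` commutes with `End A V`, so Jacobson density puts `T` in `A`.
  refine eq_top_iff.2 fun T _ => ?_
  let f : End (End A V) V :=
    { toFun := T
      map_add' := T.map_add
      map_smul' := fun g x => by
        obtain ⟨c, hc⟩ := hscalar g
        simp [End.smul_def, hc] }
  obtain ⟨a, ha⟩ := Module.Finite.toModuleEnd_moduleEnd_surjective f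
  have : (a : End K V) = T := LinearMap.ext fun x => congr($ha x)
  exact this ▸ a.2

/-- **Burnside's theorem**. -/
theorem Submonoid.span_eq_top_of_forall_map_le [Nontrivial V] (M : Submonoid (End K V))
    (hirr : ∀ q : Submodule K V, (∀ f ∈ M, q.map f ≤ q) → q = ⊥ ∨ q = ⊤) :
    Submodule.span K (M : Set (End K V)) = ⊤ := by
  have : IsSimpleModule (Algebra.adjoin K (M : Set (End K V))) V :=
    Subalgebra.isSimpleModule_of_forall_map_le _ fun q hq =>
      hirr q fun f hf => hq f (Algebra.subset_adjoin hf)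
  calc Submodule.span K (M : Set (End K V))
      = Subalgebra.toSubmodule (Algebra.adjoin K (M : Set (End K V))) := by
        rw [Algebra.adjoin_eq_span, Submonoid.closure_eq]
    _ = ⊤ := by
        rw [Subalgebra.eq_top_of_isSimpleModule (Algebra.adjoin K _), Algebra.top_toSubmodule]

end Burnside

theorem Module.End.norm_trace_le {K V : Type*} [NormedField K] [IsAlgClosed K] [AddCommGroup V]
    [Module K V] [FiniteDimensional K V] (f : End K V) {C : ℝ}
    (hC : ∀ z ∈ spectrum K f, ‖z‖ ≤ C) :
    ‖LinearMap.trace K V f‖ ≤ finrank K V * C := by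
  have hsplit := IsAlgClosed.splits f.charpoly
  have hroots : ∀ z ∈ (f.charpoly.roots.map norm), z ≤ C := by
    simp only [Multiset.mem_map]
    rintro _ ⟨z, hz, rfl⟩
    exact hC z ((f.mem_spectrum_iff_isRoot_charpoly z).2 (Polynomial.isRoot_of_mem_roots hz))
  calc ‖LinearMap.trace K V f‖ = ‖f.charpoly.roots.sum‖ := by
        rw [End.trace_eq_sum_roots_charpoly_of_splits hsplit]
    _ ≤ (f.charpoly.roots.map norm).sum := norm_multiset_sum_le _
    _ ≤ (f.charpoly.roots.map norm).card • C := Multiset.sum_le_card_nsmul _ _ hroots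
    _ = finrank K V * C := by
        rw [Multiset.card_map, Polynomial.splits_iff_card_roots.1 hsplit,
          LinearMap.charpoly_natDegree, nsmul_eq_mul]

theorem LinearMap.SeparatingLeft.isBounded_of_span_eq_top {𝕜 E : Type*} [NontriviallyNormedField 𝕜]
    [CompleteSpace 𝕜] [NormedAddCommGroup E] [NormedSpace 𝕜 E] [FiniteDimensional 𝕜 E]
    {β : E →ₗ[𝕜] E →ₗ[𝕜] 𝕜} (hβ : β.SeparatingLeft) {S : Set E}
    (hS : Submodule.span 𝕜 S = ⊤) {B : ℝ} (hB : ∀ x ∈ S, ∀ y ∈ S, ‖β x y‖ ≤ B) :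
    Bornology.IsBounded S := by
  obtain ⟨t, htS, htspan, htli⟩ := exists_linearIndependent 𝕜 S
  have := htli.finite
  have := Fintype.ofFinite t
  let φ : E →ₗ[𝕜] t → 𝕜 := LinearMap.pi fun e => β.flip e
  have hφ : LinearMap.ker φ = ⊥ := by
    refine LinearMap.ker_eq_bot'.2 fun x hx => hβ x fun y => ?_
    have hy : y ∈ Submodule.span 𝕜 t := htspan ▸ hS ▸ Submodule.mem_top
    induction hy using Submodule.span_induction with
    | mem e he => exact congr_fun hx ⟨e, he⟩
    | zero => simp
    | add y z _ _ hy hz => simp [hy, hz]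
    | smul c y _ hy => simp [hy]
  obtain ⟨K, -, hK⟩ := φ.exists_antilipschitzWith hφ
  refine isBounded_iff_forall_norm_le.2 ⟨K * max B 0, fun x hx => ?_⟩
  calc ‖x‖ ≤ K * ‖φ x‖ := by simpa using hK.le_mul_norm_sub 0 x
    _ ≤ K * max B 0 := by
        gcongr
        exact pi_norm_le_iff_of_nonneg (le_max_right _ _) |>.2 fun e =>
          (hB x hx e (htS e.2)).trans (le_max_left _ _)

section MatrixNorm

attribute [local instance] Matrix.normedAddCommGroup Matrix.normedSpace

theorem Submonoid.exists_norm_entry_le_of_span_eq_top {𝕜 n : Type*} [NontriviallyNormedField 𝕜]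
    [CompleteSpace 𝕜] [Fintype n] [DecidableEq n] (M : Submonoid (Matrix n n 𝕜))
    (hM : Submodule.span 𝕜 (M : Set (Matrix n n 𝕜)) = ⊤) {B : ℝ}
    (hB : ∀ x ∈ M, ‖x.trace‖ ≤ B) :
    ∃ R : ℝ, ∀ x ∈ M, ∀ i j, ‖x i j‖ ≤ R := by
  have hβ : ((LinearMap.mul 𝕜 (Matrix n n 𝕜)).compr₂
      (Matrix.traceLinearMap n 𝕜 𝕜)).SeparatingLeft :=
    fun x hx => Matrix.ext_iff_trace_mul_right.2 (by simpa using hx)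
  obtain ⟨R, hR⟩ := isBounded_iff_forall_norm_le.1 <|
    hβ.isBounded_of_span_eq_top hM fun x hx y hy => hB _ (M.mul_mem hx hy)
  exact ⟨R, fun x hx i j => (Matrix.norm_entry_le_entrywise_sup_norm x).trans (hR x hx)⟩

end MatrixNorm

def Subgroup.complexifiedRestrict {n : Type*} [Fintype n] [DecidableEq n]
    (Γ : Subgroup (GL n ℝ)) (W : Submodule ℂ (n → ℂ))
    (hinv : ∀ γ ∈ Γ, ∀ v ∈ W,
      (((γ : GL n ℝ) : Matrix n n ℝ).map Complex.ofReal).mulVecLin v ∈ W) :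
    Γ →* End ℂ W where
  toFun γ := (((γ : GL n ℝ) : Matrix n n ℝ).map Complex.ofReal).mulVecLin.restrict (hinv γ γ.2)
  map_one' := by ext; simp
  map_mul' γ δ := by
    have hmap (M N : Matrix n n ℝ) : (M * N).map Complex.ofReal =
        M.map Complex.ofReal * N.map Complex.ofReal := Matrix.map_mul (f := Complex.ofRealHom)
    ext
    simp [hmap]

open Matrix

/-- Let `Γ ≤ GL(d,ℝ)` act (by complexification) on a nonzero complex
subspace `W` of `ℂ^d`, invariantly and irreducibly, and suppose every element of `Γ`
has all eigenvalues of modulus at most `C` on `W`. Then the matrix coefficients of the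
restrictions of the elements of `Γ` to `W`, in a fixed basis, are uniformly bounded. -/
theorem stmt3 {d : ℕ} (Γ : Subgroup (GL (Fin d) ℝ)) (C : ℝ)
    (W : Submodule ℂ (Fin d → ℂ)) (hW0 : W ≠ ⊥)
    (hinv : ∀ γ ∈ Γ, ∀ v ∈ W,
      (((γ : GL (Fin d) ℝ) : Matrix (Fin d) (Fin d) ℝ).map Complex.ofReal).mulVecLin v ∈ W)
    (hirr : ∀ q : Submodule ℂ W,
      (∀ γ (hγ : γ ∈ Γ), q.map
        ((((γ : GL (Fin d) ℝ) : Matrix (Fin d) (Fin d) ℝ).map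
          Complex.ofReal).mulVecLin.restrict (hinv γ hγ)) ≤ q) →
      q = ⊥ ∨ q = ⊤)
    (heig : ∀ γ (hγ : γ ∈ Γ), ∀ z ∈ spectrum ℂ
      (((((γ : GL (Fin d) ℝ) : Matrix (Fin d) (Fin d) ℝ).map
        Complex.ofReal).mulVecLin.restrict (hinv γ hγ) : Module.End ℂ W)),
      ‖z‖ ≤ C)
    {ι : Type*} [Fintype ι] [DecidableEq ι] (b : Module.Basis ι ℂ W) :
    ∃ M : ℝ, ∀ γ (hγ : γ ∈ Γ), ∀ i j : ι,
      ‖(LinearMap.toMatrix b b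
        ((((γ : GL (Fin d) ℝ) : Matrix (Fin d) (Fin d) ℝ).map
          Complex.ofReal).mulVecLin.restrict (hinv γ hγ)) i j)‖ ≤ M := by
  have : Nontrivial W := Submodule.nontrivial_iff_ne_bot.2 hW0
  let ρ := Γ.complexifiedRestrict W hinv
  let ρmat := (LinearMap.toMatrixAlgEquiv b).toMonoidHom.comp ρ
  have hspan : Submodule.span ℂ (MonoidHom.mrange ρ : Set (End ℂ W)) = ⊤ :=
    (MonoidHom.mrange ρ).span_eq_top_of_forall_map_le fun q hq =>
      hirr q fun γ hγ => hq _ ⟨⟨γ, hγ⟩, rfl⟩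
  have hspan_mat : Submodule.span ℂ (MonoidHom.mrange ρmat : Set (Matrix ι ι ℂ)) = ⊤ := by
    have : (MonoidHom.mrange ρmat : Set (Matrix ι ι ℂ)) =
        (LinearMap.toMatrix b b).toLinearMap '' (MonoidHom.mrange ρ) := by
      rw [MonoidHom.coe_mrange, MonoidHom.coe_mrange, ← Set.range_comp]
      rfl
    rw [this, Submodule.span_image, hspan, Submodule.map_top, LinearEquiv.range]
  have htrace : ∀ x ∈ MonoidHom.mrange ρmat, ‖x.trace‖ ≤ finrank ℂ W * C := by
    rintro _ ⟨γ, rfl⟩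
    change ‖(LinearMap.toMatrix b b (ρ γ)).trace‖ ≤ _
    rw [← LinearMap.trace_eq_matrix_trace]
    exact (ρ γ).norm_trace_le (heig γ γ.2)
  obtain ⟨R, hR⟩ := (MonoidHom.mrange ρmat).exists_norm_entry_le_of_span_eq_top hspan_mat htrace
  exact ⟨R, fun γ hγ => hR _ ⟨⟨γ, hγ⟩, rfl⟩⟩
end

section
/- Let τ be an ergodic invertible measure-preserving transformation of a probability space (Y,λ) and φ : Y → ℝ^d Borel with ergodic sums S_nφ. Then the recurrence of (S_nφ) (a.e. point returns infinitely often to every neighborhood of 0) is equivalent to the conservativity of the skew product τ_φ(y,v) = (τ y, v + φ(y)) on (Y × ℝ^d, λ ⊗ Lebesgue). -/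
/-!
Conservativity gives recurrence by Poincaré recurrence for the sets `Y × ball 0 ε`, read off
fibrewise with Fubini.

Conversely, let `W ⊆ Y × ball c 1` be measurable and met at most once by every orbit of `τ_φ`; it
suffices to show that such sets are null. For fixed `y` and `n < N` the sets
`{v | τ_φ^n (y, v) ∈ W}` are disjoint translates of the fibres of `W` over `τ^n y`, and each lies
in a ball of radius `2` determined by the cell of the grid `t + ℤ^d` that contains `S_n y`. Hence
`N · (λ ⊗ Leb)(W)` is at most `4^d` times the expected number of cells visited by
`S_0 y, …, S_{N-1} y`. Count each cell at the last time `n < N` it is visited: then either `S_n y`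
is `δ`-close to a wall of the grid, which has probability at most `6dδ` once the offset `t` is
averaged over `[0,1)^d`, or the walk started at `τ^n y` stays outside the `δ`-ball for the
remaining `N - n` steps, which has probability `p_δ(N - n) → 0` by recurrence. Letting `N → ∞`,
then the cutoff `K` in `p_δ(K)` tend to infinity and finally `δ → 0` gives `(λ ⊗ Leb)(W) = 0`.
-/

open MeasureTheory Filter Set Topology Function
open scoped ENNReal

section SkewProduct

variable {Y E : Type*}

def skewProduct [Add E] (τ : Y → Y) (φ : Y → E) (q : Y × E) : Y × E :=
  (τ q.1, q.2 + φ q.1)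

theorem skewProduct_iterate [AddCommMonoid E] (τ : Y → Y) (φ : Y → E) (n : ℕ) (q : Y × E) :
    (skewProduct τ φ)^[n] q = (τ^[n] q.1, q.2 + birkhoffSum τ φ n q.1) := by
  induction n with
  | zero => simp
  | succ n ih =>
    rw [Function.iterate_succ_apply', ih, birkhoffSum_succ, skewProduct, add_assoc,
      Function.iterate_succ_apply']

theorem measurable_birkhoffSum [MeasurableSpace Y] [AddCommMonoid E] [MeasurableSpace E]
    [MeasurableAdd₂ E] {τ : Y → Y} {φ : Y → E} (hτ : Measurable τ) (hφ : Measurable φ) (n : ℕ) :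
    Measurable (birkhoffSum τ φ n) :=
  Finset.measurable_sum _ fun k _ => hφ.comp (hτ.iterate k)

theorem measurePreserving_skewProduct [MeasurableSpace Y] [AddGroup E] [MeasurableSpace E]
    [MeasurableAdd₂ E] {μ : Measure Y} {ν : Measure E} [SFinite μ] [SFinite ν]
    [ν.IsAddRightInvariant] {τ : Y → Y} (hτ : MeasurePreserving τ μ μ) {φ : Y → E}
    (hφ : Measurable φ) :
    MeasurePreserving (skewProduct τ φ) (μ.prod ν) (μ.prod ν) :=
  hτ.skew_product (g := fun y v => v + φ y) (measurable_snd.add (hφ.comp measurable_fst))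
    (ae_of_all _ fun y => (measurePreserving_add_right ν (φ y)).map_eq)

end SkewProduct

theorem conservative_iff_measure_nonreturning_eq_zero {α : Type*} [MeasurableSpace α]
    {f : α → α} {μ : Measure α} (hf : Measure.QuasiMeasurePreserving f μ μ) :
    Conservative f μ ↔
      ∀ s, MeasurableSet s → 0 < μ s → μ {x ∈ s | ∀ n, 1 ≤ n → f^[n] x ∉ s} = 0 := by
  refine ⟨fun h s hs _ => h.measure_mem_forall_ge_image_notMem_eq_zero hs.nullMeasurableSet 1,
    fun h => ⟨hf, fun s hs hs0 => ?_⟩⟩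
  by_contra! hno
  have hsub : s ⊆ {x ∈ s | ∀ n, 1 ≤ n → f^[n] x ∉ s} :=
    fun x hx => ⟨hx, fun n hn => hno x hx n (by omega)⟩
  exact hs0 (measure_mono_null hsub (h s hs (pos_iff_ne_zero.2 hs0)))

theorem MeasureTheory.Conservative.ae_frequently_birkhoffSum_mem {Y E : Type*} [MeasurableSpace Y]
    [NormedAddCommGroup E] [MeasurableSpace E] [OpensMeasurableSpace E] {μ : Measure Y}
    {ν : Measure E} [SFinite ν] [ν.IsOpenPosMeasure] {τ : Y → Y} {φ : Y → E}
    (h : Conservative (skewProduct τ φ) (μ.prod ν)) :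
    ∀ᵐ y ∂μ, ∀ U ∈ 𝓝 (0 : E), ∃ᶠ n in atTop, birkhoffSum τ φ n y ∈ U := by
  have hball : ∀ ε > 0, ∀ᵐ y ∂μ, ∃ᶠ n in atTop, birkhoffSum τ φ n y ∈ Metric.ball 0 ε := by
    intro ε hε
    have hA : MeasurableSet (univ ×ˢ Metric.ball (0 : E) (ε / 2) : Set (Y × E)) :=
      MeasurableSet.univ.prod Metric.isOpen_ball.measurableSet
    filter_upwards [Measure.ae_ae_of_ae_prod
      (h.ae_mem_imp_frequently_image_mem hA.nullMeasurableSet)] with y hy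
    obtain ⟨v, hv, hvrec⟩ := Measure.exists_mem_of_measure_ne_zero_of_ae
      (Metric.measure_ball_pos ν 0 (half_pos hε)).ne' (ae_restrict_of_ae hy)
    refine (hvrec ⟨mem_univ y, hv⟩).mono fun n hn => ?_
    rw [skewProduct_iterate] at hn
    have h1 := mem_ball_zero_iff.1 hv
    have h2 := mem_ball_zero_iff.1 hn.2
    rw [mem_ball_zero_iff]
    calc ‖birkhoffSum τ φ n y‖ = ‖(v + birkhoffSum τ φ n y) - v‖ := by rw [add_sub_cancel_left]
      _ ≤ ‖v + birkhoffSum τ φ n y‖ + ‖v‖ := norm_sub_le _ _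
      _ < ε := by linarith
  filter_upwards [ae_all_iff.2 fun m : ℕ => hball (1 / (m + 1)) Nat.one_div_pos_of_nat]
    with y hy U hU
  obtain ⟨ε, hε, hεU⟩ := Metric.mem_nhds_iff.1 hU
  obtain ⟨m, hm⟩ := exists_nat_one_div_lt hε
  exact (hy m).mono fun n hn => hεU (Metric.ball_subset_ball hm.le hn)

section Counting

theorem ENNReal.le_of_forall_nat_mul_le_mul_add {s x y : ℝ≥0∞} (hy : y ≠ ∞)
    (h : ∀ N : ℕ, N * s ≤ N * x + y) : s ≤ x := by
  by_contra! hxs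
  obtain ⟨N, hN⟩ := ENNReal.exists_nat_mul_gt (tsub_pos_of_lt hxs).ne' hy
  refine hN.not_ge ?_
  rw [ENNReal.mul_sub fun _ _ => ENNReal.natCast_ne_top N, tsub_le_iff_left]
  exact h N

theorem sum_range_sub_le_of_antitone {p : ℕ → ℝ≥0∞} (hp : Antitone p) (hp1 : ∀ n, p n ≤ 1)
    (N K : ℕ) : ∑ n ∈ Finset.range N, p (N - n) ≤ K + N * p K := by
  classical
  calc ∑ n ∈ Finset.range N, p (N - n)
      ≤ ∑ n ∈ Finset.range N, (p K + if N - n < K then 1 else 0) := by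
        refine Finset.sum_le_sum fun n _ => ?_
        split_ifs with h
        · exact (hp1 _).trans le_add_self
        · simpa using hp (not_lt.1 h)
    _ = N * p K + (({n ∈ Finset.range N | N - n < K}).card : ℝ≥0∞) := by
        rw [Finset.sum_add_distrib, Finset.sum_const, Finset.card_range, nsmul_eq_mul,
          Finset.sum_boole]
    _ ≤ N * p K + K := by
        gcongr
        calc ({n ∈ Finset.range N | N - n < K}).card ≤ (Finset.Ico (N - K) N).card :=
              Finset.card_le_card fun n hn => by
                simp only [Finset.mem_filter, Finset.mem_range] at hn
                simp only [Finset.mem_Ico]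
                omega
          _ ≤ K := by simp only [Nat.card_Ico]; omega
    _ = K + N * p K := add_comm _ _

theorem sum_measure_le_card_image_mul {α β E : Type*} [MeasurableSpace E] [DecidableEq β]
    {ν : Measure E} {D : α → Set E} (hD : Pairwise (Disjoint on D))
    (hDm : ∀ n, MeasurableSet (D n)) {B : β → Set E} {g : α → β} (hDB : ∀ n, D n ⊆ B (g n))
    {b : ℝ≥0∞} (hB : ∀ j, ν (B j) ≤ b) (s : Finset α) :
    ∑ n ∈ s, ν (D n) ≤ (s.image g).card * b :=
  calc ∑ n ∈ s, ν (D n) = ν (⋃ n ∈ s, D n) :=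
        (measure_biUnion_finset (hD.set_pairwise _) fun n _ => hDm n).symm
    _ ≤ ν (⋃ j ∈ s.image g, B j) :=
        measure_mono <| iUnion₂_subset fun n hn =>
          (hDB n).trans (subset_biUnion_of_mem (Finset.mem_image_of_mem g hn))
    _ ≤ ∑ j ∈ s.image g, ν (B j) := measure_biUnion_finset_le _ _
    _ ≤ ∑ _j ∈ s.image g, b := Finset.sum_le_sum fun j _ => hB j
    _ = (s.image g).card * b := by rw [Finset.sum_const, nsmul_eq_mul]

open Classical in
noncomputable def lastVisits {α : Type*} (g : ℕ → α) (N : ℕ) : Finset ℕ :=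
  {n ∈ Finset.range N | ∀ m, n < m → m < N → g m ≠ g n}

theorem lastVisits_subset_range {α : Type*} (g : ℕ → α) (N : ℕ) :
    lastVisits g N ⊆ Finset.range N := by
  classical
  exact Finset.filter_subset _ _

theorem card_image_range_le_card_lastVisits {α : Type*} [DecidableEq α] (g : ℕ → α) (N : ℕ) :
    ((Finset.range N).image g).card ≤ (lastVisits g N).card := by
  refine Finset.card_le_card_of_surjOn g ?_
  intro j hj
  obtain ⟨m, hm, rfl⟩ := Finset.mem_image.1 hj
  set S := {k ∈ Finset.range N | g k = g m}
  have hS : S.Nonempty := ⟨m, Finset.mem_filter.2 ⟨hm, rfl⟩⟩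
  obtain ⟨hmaxN, hmax⟩ := Finset.mem_filter.1 (S.max'_mem hS)
  refine ⟨S.max' hS, ?_, hmax⟩
  simp only [lastVisits, Finset.coe_filter, mem_ofPred_eq]
  refine ⟨hmaxN, fun k hk hkN hgk => ?_⟩
  have : k ∈ S := Finset.mem_filter.2 ⟨Finset.mem_range.2 hkN, hgk.trans hmax⟩
  exact (S.le_max' k this).not_gt hk

end Counting

section Grid

def intNbhd (δ : ℝ) : Set ℝ := ⋃ m : ℤ, Metric.ball (m : ℝ) δ

theorem isOpen_intNbhd (δ : ℝ) : IsOpen (intNbhd δ) :=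
  isOpen_iUnion fun _ => Metric.isOpen_ball

theorem Int.floor_add_eq_of_notMem_intNbhd {x b δ : ℝ} (hx : x ∉ intNbhd δ) (hb : |b| < δ) :
    ⌊x + b⌋ = ⌊x⌋ := by
  simp only [intNbhd, mem_iUnion, Metric.mem_ball, Real.dist_eq, not_exists, not_lt] at hx
  have h0 := hx ⌊x⌋
  have h1 := hx (⌊x⌋ + 1)
  rw [abs_of_nonneg (sub_nonneg.2 (Int.floor_le x))] at h0
  rw [Int.cast_add, Int.cast_one, abs_of_neg (by linarith [Int.lt_floor_add_one x])] at h1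
  rw [Int.floor_eq_iff]
  constructor <;> linarith [abs_lt.1 hb]

theorem volume_Ico_inter_preimage_intNbhd_le (a : ℝ) {δ : ℝ} (hδ : δ ≤ 1) :
    volume (Ico 0 1 ∩ (a - ·) ⁻¹' intNbhd δ) ≤ ENNReal.ofReal (6 * δ) := by
  have hsub : Ico 0 1 ∩ (a - ·) ⁻¹' intNbhd δ ⊆
      ⋃ m ∈ Finset.Icc (⌊a⌋ - 1) (⌊a⌋ + 1), Metric.ball (a - m) δ := by
    rintro x ⟨⟨hx0, hx1⟩, hx⟩
    simp only [intNbhd, mem_preimage, mem_iUnion, Metric.mem_ball, Real.dist_eq] at hx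
    obtain ⟨m, hm⟩ := hx
    have hm' := abs_lt.1 hm
    have hlo : ⌊a⌋ - 1 ≤ m := by
      have : (⌊a⌋ : ℝ) - 2 < m := by linarith [Int.floor_le a]
      have : ⌊a⌋ - 2 < m := by exact_mod_cast this
      omega
    have hhi : m ≤ ⌊a⌋ + 1 := by
      have : (m : ℝ) < ⌊a⌋ + 2 := by linarith [Int.lt_floor_add_one a]
      have : m < ⌊a⌋ + 2 := by exact_mod_cast this
      omega
    simp only [mem_iUnion, Metric.mem_ball, Real.dist_eq, Finset.mem_Icc]
    exact ⟨m, ⟨hlo, hhi⟩, abs_lt.2 ⟨by linarith, by linarith⟩⟩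
  calc volume (Ico 0 1 ∩ (a - ·) ⁻¹' intNbhd δ)
      ≤ ∑ m ∈ Finset.Icc (⌊a⌋ - 1) (⌊a⌋ + 1), volume (Metric.ball (a - m) δ) :=
        (measure_mono hsub).trans (measure_biUnion_finset_le _ _)
    _ = ENNReal.ofReal (6 * δ) := by
        simp only [Real.volume_ball, Finset.sum_const, Int.card_Icc, nsmul_eq_mul]
        rw [show (⌊a⌋ + 1 + 1 - (⌊a⌋ - 1)).toNat = 3 by omega,
          show 6 * δ = 3 * (2 * δ) by ring, ENNReal.ofReal_mul (by norm_num)]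
        norm_num

variable (ι : Type*)

def nearGrid (δ : ℝ) : Set (ι → ℝ) := ⋃ i, Function.eval i ⁻¹' intNbhd δ

theorem isOpen_nearGrid (δ : ℝ) : IsOpen (nearGrid ι δ) :=
  isOpen_iUnion fun i => (isOpen_intNbhd δ).preimage (continuous_apply i)

variable [Fintype ι]

noncomputable def unitCubeMeasure : Measure (ι → ℝ) := Measure.pi fun _ => volume.restrict (Ico 0 1)

instance : IsProbabilityMeasure (volume.restrict (Ico (0 : ℝ) 1)) :=
  ⟨by simp⟩

instance : IsProbabilityMeasure (unitCubeMeasure ι) := by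
  unfold unitCubeMeasure; infer_instance

variable {ι}

theorem unitCubeMeasure_preimage_nearGrid_le (a : ι → ℝ) {δ : ℝ} (hδ : δ ≤ 1) :
    unitCubeMeasure ι ((a - ·) ⁻¹' nearGrid ι δ) ≤ Fintype.card ι * ENNReal.ofReal (6 * δ) := by
  have hpre : (a - ·) ⁻¹' nearGrid ι δ = ⋃ i, Function.eval i ⁻¹' ((a i - ·) ⁻¹' intNbhd δ) := by
    ext t; simp [nearGrid]
  rw [hpre]
  refine (measure_iUnion_fintype_le _ _).trans ?_
  calc ∑ i, unitCubeMeasure ι (Function.eval i ⁻¹' ((a i - ·) ⁻¹' intNbhd δ))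
      = ∑ i, volume (Ico 0 1 ∩ (a i - ·) ⁻¹' intNbhd δ) := by
        refine Finset.sum_congr rfl fun i _ => ?_
        have hm : MeasurableSet ((a i - ·) ⁻¹' intNbhd δ) :=
          ((isOpen_intNbhd δ).preimage (continuous_sub_left (a i))).measurableSet
        rw [unitCubeMeasure, (measurePreserving_eval _ i).measure_preimage hm.nullMeasurableSet,
          Measure.restrict_apply hm, inter_comm]
    _ ≤ ∑ _i : ι, ENNReal.ofReal (6 * δ) :=
        Finset.sum_le_sum fun i _ => volume_Ico_inter_preimage_intNbhd_le (a i) hδ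
    _ = Fintype.card ι * ENNReal.ofReal (6 * δ) := by
        rw [Finset.sum_const, Finset.card_univ, nsmul_eq_mul]

noncomputable def gridCorner (x : ι → ℝ) : ι → ℝ := fun i => ⌊x i⌋

theorem norm_sub_gridCorner_lt_one (x : ι → ℝ) : ‖x - gridCorner x‖ < 1 := by
  refine (pi_norm_lt_iff one_pos).2 fun i => ?_
  rw [Pi.sub_apply, gridCorner, Int.self_sub_floor, Real.norm_eq_abs,
    abs_of_nonneg (Int.fract_nonneg _)]
  exact Int.fract_lt_one _

theorem gridCorner_add_of_notMem_nearGrid {x b : ι → ℝ} {δ : ℝ} (hx : x ∉ nearGrid ι δ)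
    (hb : ‖b‖ < δ) : gridCorner (x + b) = gridCorner x :=
  funext fun i => congrArg Int.cast <|
    Int.floor_add_eq_of_notMem_intNbhd (fun hxi => hx (mem_iUnion_of_mem i hxi))
      ((Real.norm_eq_abs _ ▸ norm_le_pi_norm b i).trans_lt hb)

theorem mem_ball_sub_gridCorner_of_dist_add_lt_one {v s c t : ι → ℝ} (h : dist (v + s) c < 1) :
    v ∈ Metric.ball (c - t - gridCorner (s - t)) 2 := by
  have h' := norm_sub_gridCorner_lt_one (s - t)
  rw [dist_eq_norm] at h
  rw [Metric.mem_ball, dist_eq_norm]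
  calc ‖v - (c - t - gridCorner (s - t))‖ = ‖(v + s - c) - (s - t - gridCorner (s - t))‖ := by
        congr 1; abel
    _ ≤ ‖v + s - c‖ + ‖s - t - gridCorner (s - t)‖ := norm_sub_le _ _
    _ < 2 := by linarith

end Grid

section Walk

variable {Y E : Type*} [NormedAddCommGroup E]

def noReturnBefore (τ : Y → Y) (φ : Y → E) (δ : ℝ) (K : ℕ) : Set Y :=
  {y | ∀ k, 1 ≤ k → k < K → δ ≤ ‖birkhoffSum τ φ k y‖}

theorem antitone_noReturnBefore (τ : Y → Y) (φ : Y → E) (δ : ℝ) :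
    Antitone (noReturnBefore τ φ δ) :=
  fun _ _ hKK' _ hy k hk1 hk2 => hy k hk1 (hk2.trans_le hKK')

variable [MeasurableSpace Y] [MeasurableSpace E] [MeasurableAdd₂ E] [OpensMeasurableSpace E]
  {τ : Y → Y} {φ : Y → E}

theorem measurableSet_noReturnBefore (hτ : Measurable τ) (hφ : Measurable φ) (δ : ℝ) (K : ℕ) :
    MeasurableSet (noReturnBefore τ φ δ K) := by
  simp only [noReturnBefore, ofPred_forall]
  exact .iInter fun k => .iInter fun _ => .iInter fun _ =>
    measurableSet_le measurable_const (measurable_birkhoffSum hτ hφ k).norm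

theorem tendsto_measure_noReturnBefore {μ : Measure Y} [IsFiniteMeasure μ] (hτ : Measurable τ)
    (hφ : Measurable φ) {δ : ℝ} (hret : ∀ᵐ y ∂μ, ∃ k, 1 ≤ k ∧ ‖birkhoffSum τ φ k y‖ < δ) :
    Tendsto (fun K => μ (noReturnBefore τ φ δ K)) atTop (𝓝 0) := by
  have hnull : μ (⋂ K, noReturnBefore τ φ δ K) = 0 := by
    refine measure_eq_zero_iff_ae_notMem.2 (hret.mono fun y ⟨k, hk1, hk⟩ hy => ?_)
    exact (mem_iInter.1 hy (k + 1) k hk1 k.lt_succ_self).not_gt hk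
  rw [← hnull]
  exact tendsto_measure_iInter_atTop
    (fun K => (measurableSet_noReturnBefore hτ hφ δ K).nullMeasurableSet)
    (antitone_noReturnBefore τ φ δ) ⟨0, measure_ne_top μ _⟩

end Walk

section LastVisits

variable {Y ι : Type*} [Fintype ι] {τ : Y → Y} {φ : Y → ι → ℝ}

theorem sub_mem_nearGrid_or_iterate_mem_noReturnBefore {t : ι → ℝ} {δ : ℝ} {y : Y} {N n : ℕ}
    (hn : n ∈ lastVisits (fun m => gridCorner (birkhoffSum τ φ m y - t)) N) :
    birkhoffSum τ φ n y - t ∈ nearGrid ι δ ∨ τ^[n] y ∈ noReturnBefore τ φ δ (N - n) := by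
  refine or_iff_not_imp_left.2 fun hnear k hk1 hkN => ?_
  by_contra! hk
  simp only [lastVisits, Finset.mem_filter, Finset.mem_range] at hn
  refine hn.2 (n + k) (by omega) (by omega) ?_
  rw [birkhoffSum_add, add_sub_right_comm, gridCorner_add_of_notMem_nearGrid hnear hk]

theorem card_lastVisits_le (t : ι → ℝ) (δ : ℝ) (y : Y) (N : ℕ) :
    ((lastVisits (fun m => gridCorner (birkhoffSum τ φ m y - t)) N).card : ℝ≥0∞) ≤
      ∑ n ∈ Finset.range N, ((nearGrid ι δ).indicator 1 (birkhoffSum τ φ n y - t) +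
        (noReturnBefore τ φ δ (N - n)).indicator 1 (τ^[n] y)) := by
  rw [Finset.card_eq_sum_ones, Nat.cast_sum, Nat.cast_one]
  refine (Finset.sum_le_sum fun n hn => ?_).trans
    (Finset.sum_le_sum_of_subset (lastVisits_subset_range _ N))
  rcases sub_mem_nearGrid_or_iterate_mem_noReturnBefore (δ := δ) hn with h | h
  · simp [h]
  · simp [h]

end LastVisits

section Wandering

variable {Y ι : Type*} [MeasurableSpace Y] [Fintype ι] {μ : Measure Y} {τ : Y → Y}
  {φ : Y → ι → ℝ} {W : Set (Y × (ι → ℝ))} {c : ι → ℝ}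

theorem sum_volume_fiber_iterate_le (hWm : MeasurableSet W) (hWc : W ⊆ univ ×ˢ Metric.ball c 1)
    (hW : ∀ p ∈ W, ∀ m ≠ 0, (skewProduct τ φ)^[m] p ∉ W) (t : ι → ℝ) (y : Y) (N : ℕ) :
    ∑ n ∈ Finset.range N, volume (Prod.mk (τ^[n] y) ⁻¹' W) ≤
      (lastVisits (fun m => gridCorner (birkhoffSum τ φ m y - t)) N).card *
        ENNReal.ofReal (4 ^ Fintype.card ι) := by
  classical
  set D : ℕ → Set (ι → ℝ) := fun n => (· + birkhoffSum τ φ n y) ⁻¹' (Prod.mk (τ^[n] y) ⁻¹' W)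
  have hDm : ∀ n, MeasurableSet (D n) := fun n =>
    (measurable_add_const _) (measurable_prodMk_left hWm)
  have hD : ∀ n v, v ∈ D n ↔ (skewProduct τ φ)^[n] (y, v) ∈ W := fun n v => by
    rw [skewProduct_iterate]; rfl
  have hDdisj : Pairwise (Disjoint on D) := by
    have key : ∀ n m, n < m → Disjoint (D n) (D m) := fun n m hnm =>
      disjoint_left.2 fun v hvn hvm => by
        rw [hD] at hvn hvm
        refine hW _ hvn (m - n) (by omega) ?_
        rwa [← iterate_add_apply, Nat.sub_add_cancel hnm.le]
    intro n m hnm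
    rcases hnm.lt_or_gt with h | h
    · exact key n m h
    · exact (key m n h).symm
  have hDball : ∀ n, D n ⊆ Metric.ball (c - t - gridCorner (birkhoffSum τ φ n y - t)) 2 :=
    fun n v hv => mem_ball_sub_gridCorner_of_dist_add_lt_one (hWc hv).2
  calc ∑ n ∈ Finset.range N, volume (Prod.mk (τ^[n] y) ⁻¹' W)
      = ∑ n ∈ Finset.range N, volume (D n) := Finset.sum_congr rfl fun n _ =>
        ((measurePreserving_add_right volume _).measure_preimage
          (measurable_prodMk_left hWm).nullMeasurableSet).symm
    _ ≤ ((Finset.range N).image fun m => gridCorner (birkhoffSum τ φ m y - t)).card *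
          ENNReal.ofReal (4 ^ Fintype.card ι) :=
        sum_measure_le_card_image_mul hDdisj hDm
          (B := fun j => Metric.ball (c - t - j) 2) hDball
          (fun j => by rw [Real.volume_pi_ball _ two_pos]; norm_num) _
    _ ≤ _ := by
        gcongr
        exact card_image_range_le_card_lastVisits _ N

theorem lintegral_sum_volume_fiber_iterate (hτ : MeasurePreserving τ μ μ)
    (hWm : MeasurableSet W) (N : ℕ) :
    ∫⁻ y, ∑ n ∈ Finset.range N, volume (Prod.mk (τ^[n] y) ⁻¹' W) ∂μ = N * μ.prod volume W := by
  have hF : Measurable fun y => volume (Prod.mk y ⁻¹' W) := measurable_measure_prodMk_left hWm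
  rw [lintegral_finsetSum' (f := fun n y => volume (Prod.mk (τ^[n] y) ⁻¹' W)) _
    fun n _ => (hF.comp (hτ.measurable.iterate n)).aemeasurable]
  simp_rw [fun n => (hτ.iterate n).lintegral_comp (f := fun y => volume (Prod.mk y ⁻¹' W)) hF]
  rw [Finset.sum_const, Finset.card_range, nsmul_eq_mul, Measure.prod_apply hWm]

variable [IsProbabilityMeasure μ]

theorem natCast_mul_measure_le (hτ : MeasurePreserving τ μ μ) (hφ : Measurable φ)
    (hWm : MeasurableSet W) (hWc : W ⊆ univ ×ˢ Metric.ball c 1)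
    (hW : ∀ p ∈ W, ∀ m ≠ 0, (skewProduct τ φ)^[m] p ∉ W) {δ : ℝ} (hδ : δ ≤ 1) (N : ℕ) :
    N * μ.prod volume W ≤ ENNReal.ofReal (4 ^ Fintype.card ι) *
      ∑ n ∈ Finset.range N, (Fintype.card ι * ENNReal.ofReal (6 * δ) +
        μ (noReturnBefore τ φ δ (N - n))) := by
  set ν := unitCubeMeasure ι
  set A : ℕ → Set ((ι → ℝ) × Y) := fun n => (fun z => birkhoffSum τ φ n z.2 - z.1) ⁻¹' nearGrid ι δ
  set B : ℕ → Set ((ι → ℝ) × Y) := fun n => (fun z => τ^[n] z.2) ⁻¹' noReturnBefore τ φ δ (N - n)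
  have hA : ∀ n, MeasurableSet (A n) := fun n => (isOpen_nearGrid ι δ).measurableSet.preimage
    (((measurable_birkhoffSum hτ.measurable hφ n).comp measurable_snd).sub measurable_fst)
  have hB : ∀ n, MeasurableSet (B n) := fun n =>
    (measurableSet_noReturnBefore hτ.measurable hφ δ _).preimage
      ((hτ.measurable.iterate n).comp measurable_snd)
  calc (N : ℝ≥0∞) * μ.prod volume W
      = ∫⁻ z, ∑ n ∈ Finset.range N, volume (Prod.mk (τ^[n] z.2) ⁻¹' W) ∂ν.prod μ := by
        rw [← lintegral_sum_volume_fiber_iterate hτ hWm,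
          measurePreserving_snd.lintegral_comp (f := fun y =>
            ∑ n ∈ Finset.range N, volume (Prod.mk (τ^[n] y) ⁻¹' W))]
        exact Finset.measurable_sum _ fun n _ =>
          (measurable_measure_prodMk_left hWm).comp (hτ.measurable.iterate n)
    _ ≤ ∫⁻ z, ENNReal.ofReal (4 ^ Fintype.card ι) *
          ∑ n ∈ Finset.range N, ((A n).indicator 1 z + (B n).indicator 1 z) ∂ν.prod μ := by
        refine lintegral_mono fun z => ?_
        rw [mul_comm]
        exact (sum_volume_fiber_iterate_le hWm hWc hW z.1 z.2 N).trans
          (mul_le_mul_left (card_lastVisits_le z.1 δ z.2 N) _)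
    _ = ENNReal.ofReal (4 ^ Fintype.card ι) *
          ∑ n ∈ Finset.range N, (ν.prod μ (A n) + ν.prod μ (B n)) := by
        rw [lintegral_const_mul' _ _ ENNReal.ofReal_ne_top, lintegral_finsetSum'
          (f := fun n z => (A n).indicator 1 z + (B n).indicator 1 z) _ fun n _ =>
          ((measurable_one.indicator (hA n)).add (measurable_one.indicator (hB n))).aemeasurable]
        simp_rw [lintegral_add_left (measurable_one.indicator (hA _)),
          lintegral_indicator_one (hA _), lintegral_indicator_one (hB _)]
    _ ≤ _ := by
        gcongr with n hn
        · rw [Measure.prod_apply_symm (hA n)]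
          calc ∫⁻ y, ν ((fun t => birkhoffSum τ φ n y - t) ⁻¹' nearGrid ι δ) ∂μ
              ≤ ∫⁻ _, Fintype.card ι * ENNReal.ofReal (6 * δ) ∂μ :=
                lintegral_mono fun y => unitCubeMeasure_preimage_nearGrid_le _ hδ
            _ = Fintype.card ι * ENNReal.ofReal (6 * δ) := by simp
        · have hNR := measurableSet_noReturnBefore hτ.measurable hφ δ (N - n)
          change ν.prod μ (Prod.snd ⁻¹' (τ^[n] ⁻¹' noReturnBefore τ φ δ (N - n))) ≤ _
          rw [measurePreserving_snd.measure_preimage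
            ((hτ.measurable.iterate n) hNR).nullMeasurableSet]
          exact ((hτ.iterate n).measure_preimage hNR.nullMeasurableSet).le

theorem measure_eq_zero_of_forall_iterate_notMem (hτ : MeasurePreserving τ μ μ)
    (hφ : Measurable φ) (hret : ∀ δ > 0, ∀ᵐ y ∂μ, ∃ k, 1 ≤ k ∧ ‖birkhoffSum τ φ k y‖ < δ)
    {W : Set (Y × (ι → ℝ))} {c : ι → ℝ} (hWm : MeasurableSet W)
    (hWc : W ⊆ univ ×ˢ Metric.ball c 1) (hW : ∀ p ∈ W, ∀ m ≠ 0, (skewProduct τ φ)^[m] p ∉ W) :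
    μ.prod volume W = 0 := by
  set C := ENNReal.ofReal (4 ^ Fintype.card ι)
  set a : ℝ → ℝ≥0∞ := fun δ => Fintype.card ι * ENNReal.ofReal (6 * δ)
  set p : ℝ → ℕ → ℝ≥0∞ := fun δ K => μ (noReturnBefore τ φ δ K)
  have hK : ∀ δ, 0 < δ → δ ≤ 1 → ∀ K : ℕ, μ.prod volume W ≤ C * (a δ + p δ K) := by
    intro δ hδ0 hδ1 K
    refine ENNReal.le_of_forall_nat_mul_le_mul_add (y := C * K)
      (ENNReal.mul_ne_top ENNReal.ofReal_ne_top (ENNReal.natCast_ne_top K)) fun N => ?_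
    calc (N : ℝ≥0∞) * μ.prod volume W
        ≤ C * ∑ n ∈ Finset.range N, (a δ + p δ (N - n)) :=
          natCast_mul_measure_le hτ hφ hWm hWc hW hδ1 N
      _ ≤ C * (N * a δ + (K + N * p δ K)) := by
          rw [Finset.sum_add_distrib, Finset.sum_const, Finset.card_range, nsmul_eq_mul]
          gcongr
          exact sum_range_sub_le_of_antitone
            (fun _ _ h => measure_mono (antitone_noReturnBefore τ φ δ h)) (fun _ => prob_le_one) N K
      _ = N * (C * (a δ + p δ K)) + C * K := by ring
  have hδ : ∀ δ, 0 < δ → δ ≤ 1 → μ.prod volume W ≤ C * a δ := fun δ hδ0 hδ1 => by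
    have hp := tendsto_measure_noReturnBefore hτ.measurable hφ (hret δ hδ0)
    have hKlim : Tendsto (fun K => C * (a δ + p δ K)) atTop (𝓝 (C * a δ)) := by
      simpa using ENNReal.Tendsto.const_mul (tendsto_const_nhds.add hp)
        (Or.inr ENNReal.ofReal_ne_top)
    exact ge_of_tendsto' hKlim (hK δ hδ0 hδ1)
  have hlim : Tendsto (fun δ => C * a δ) (𝓝[>] 0) (𝓝 0) := by
    have h6 : Tendsto (fun δ : ℝ => 6 * δ) (𝓝[>] 0) (𝓝 0) :=
      ((continuous_const_mul 6).tendsto' 0 0 (mul_zero 6)).mono_left nhdsWithin_le_nhds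
    have h := ENNReal.Tendsto.const_mul (a := C) (ENNReal.Tendsto.const_mul
      (a := (Fintype.card ι : ℝ≥0∞)) (ENNReal.tendsto_ofReal h6)
      (Or.inr (ENNReal.natCast_ne_top _))) (Or.inr ENNReal.ofReal_ne_top)
    rwa [ENNReal.ofReal_zero, mul_zero, mul_zero] at h
  exact nonpos_iff_eq_zero.1 <| ge_of_tendsto hlim <|
    Filter.eventually_of_mem (Ioc_mem_nhdsGT one_pos) fun δ hδ' => hδ δ hδ'.1 hδ'.2

theorem conservative_skewProduct_of_ae_frequently_birkhoffSum_mem (hτ : MeasurePreserving τ μ μ)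
    (hφ : Measurable φ)
    (hrec : ∀ᵐ y ∂μ, ∀ U ∈ 𝓝 (0 : ι → ℝ), ∃ᶠ n in atTop, birkhoffSum τ φ n y ∈ U) :
    Conservative (skewProduct τ φ) (μ.prod volume) := by
  refine ⟨(measurePreserving_skewProduct hτ hφ).quasiMeasurePreserving, fun s hs hs0 => ?_⟩
  by_contra! hno
  have hret : ∀ δ > 0, ∀ᵐ y ∂μ, ∃ k, 1 ≤ k ∧ ‖birkhoffSum τ φ k y‖ < δ := fun δ hδ =>
    hrec.mono fun y hy => (((hy _ (Metric.ball_mem_nhds 0 hδ)).and_eventually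
      (eventually_ge_atTop 1)).exists).imp fun k hk => ⟨hk.2, mem_ball_zero_iff.1 hk.1⟩
  have hcover : s ⊆ ⋃ z : ι → ℤ, s ∩ univ ×ˢ Metric.ball (fun i => (z i : ℝ)) 1 := by
    intro p hp
    refine mem_iUnion.2 ⟨fun i => round (p.2 i), hp, mem_univ _, ?_⟩
    refine (dist_pi_lt_iff one_pos).2 fun i => ?_
    rw [Real.dist_eq]
    exact (abs_sub_round _).trans_lt (by norm_num)
  refine hs0 (measure_mono_null hcover (measure_iUnion_null fun z => ?_))
  exact measure_eq_zero_of_forall_iterate_notMem hτ hφ hret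
    (hs.inter (MeasurableSet.univ.prod Metric.isOpen_ball.measurableSet)) inter_subset_right
    fun p hp m hm hmem => hno p hp.1 m hm hmem.1

end Wandering

theorem stmt15_general {Y : Type*} [MeasurableSpace Y] (lam : Measure Y)
    [IsProbabilityMeasure lam] {d : ℕ}
    (τ : Y → Y) (hτ : Ergodic τ lam)
    (φ : Y → (Fin d → ℝ)) (hφ : Measurable φ) :
    (∀ᵐ y ∂lam, ∀ U ∈ nhds (0 : Fin d → ℝ),
      {n : ℕ | (∑ k ∈ Finset.range n, φ (τ^[k] y)) ∈ U}.Infinite) ↔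
    (∀ A : Set (Y × (Fin d → ℝ)), MeasurableSet A →
      0 < (lam.prod volume) A →
      (lam.prod volume) {p ∈ A | ∀ n : ℕ, 1 ≤ n →
        (fun q : Y × (Fin d → ℝ) => (τ q.1, q.2 + φ q.1))^[n] p ∉ A} = 0) := by
  have hT := measurePreserving_skewProduct (ν := volume) hτ.toMeasurePreserving hφ
  simp only [← Nat.frequently_atTop_iff_infinite]
  exact (Iff.intro
    (conservative_skewProduct_of_ae_frequently_birkhoffSum_mem hτ.toMeasurePreserving hφ)
    Conservative.ae_frequently_birkhoffSum_mem).trans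
      (conservative_iff_measure_nonreturning_eq_zero hT.quasiMeasurePreserving)

/-- Let `τ` be an ergodic invertible measure-preserving transformation
of a probability space `(Y,λ)` and `φ : Y → ℝ^d` Borel, with ergodic sums
`S_nφ(y) = ∑_{k<n} φ(τ^k y)`. Then recurrence of `(S_nφ)` (a.e. point returns infinitely
often to every neighborhood of `0`) is equivalent to conservativity of the skew product
`τ_φ(y,v) = (τ y, v + φ(y))` on `(Y × ℝ^d, λ ⊗ Leb)`. -/
theorem stmt15 {Y : Type*} [MeasurableSpace Y] (lam : Measure Y)
    [IsProbabilityMeasure lam] {d : ℕ}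
    (τ : Y → Y) (hτb : Function.Bijective τ) (hτ : Ergodic τ lam)
    (φ : Y → (Fin d → ℝ)) (hφ : Measurable φ) :
    (∀ᵐ y ∂lam, ∀ U ∈ nhds (0 : Fin d → ℝ),
      {n : ℕ | (∑ k ∈ Finset.range n, φ (τ^[k] y)) ∈ U}.Infinite) ↔
    (∀ A : Set (Y × (Fin d → ℝ)), MeasurableSet A →
      0 < (lam.prod volume) A →
      (lam.prod volume) {p ∈ A | ∀ n : ℕ, 1 ≤ n →
        (fun q : Y × (Fin d → ℝ) => (τ q.1, q.2 + φ q.1))^[n] p ∉ A} = 0) :=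
  stmt15_general lam τ hτ φ hφ
end

section
/- Let θ : G → ℂ be defined by θ(g) = ∫ f(gx) conj(f(x)) dx for a function f with |f| = 1 a.e. on a space with G-invariant probability measure. If g satisfies |θ(g)| = 1, then f(gx) = θ(g) f(x) a.e., and consequently θ(gh) = θ(hg) = θ(g)θ(h) for all h ∈ G. -/
open MeasureTheory ComplexConjugate

/-! For unimodular `a, b` one has `‖a - b‖² = 2 (1 - Re (a * conj b))`, so `Re (u x * conj (v x)) ≤ 1`
for unimodular functions `u, v`, and `∫ u * conj v = 1` on a probability space forces equality
almost everywhere, i.e. `u = v` a.e. Taking `u = f (g • ·)` and `v = θ g * f`, whose correlation is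
`conj (θ g) * θ g = |θ g|² = 1`, gives `f (g • x) = θ g * f x`. Substituting this into `θ (g * h)`,
and into `θ (h * g)` after the change of variables `x ↦ g • x`, gives multiplicativity. -/

namespace Complex

lemma norm_sub_sq_eq_of_norm_eq_one {a b : ℂ} (ha : ‖a‖ = 1) (hb : ‖b‖ = 1) :
    ‖a - b‖ ^ 2 = 2 * (1 - (a * conj b).re) := by
  rw [Complex.sq_norm, normSq_sub, normSq_eq_norm_sq, normSq_eq_norm_sq, ha, hb]
  ring

lemma re_mul_conj_le_one {a b : ℂ} (ha : ‖a‖ = 1) (hb : ‖b‖ = 1) : (a * conj b).re ≤ 1 := by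
  nlinarith [norm_sub_sq_eq_of_norm_eq_one ha hb, sq_nonneg ‖a - b‖]

lemma eq_of_re_mul_conj_eq_one {a b : ℂ} (ha : ‖a‖ = 1) (hb : ‖b‖ = 1)
    (h : (a * conj b).re = 1) : a = b := by
  have := norm_sub_sq_eq_of_norm_eq_one ha hb
  rwa [h, sub_self, mul_zero, sq_eq_zero_iff, norm_eq_zero, sub_eq_zero] at this

end Complex

theorem ae_eq_of_integral_mul_conj_eq_one {X : Type*} [MeasurableSpace X] {μ : Measure X}
    [IsProbabilityMeasure μ] {u v : X → ℂ} (hu : AEStronglyMeasurable u μ)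
    (hv : AEStronglyMeasurable v μ) (hu1 : ∀ᵐ x ∂μ, ‖u x‖ = 1) (hv1 : ∀ᵐ x ∂μ, ‖v x‖ = 1)
    (h : ∫ x, u x * conj (v x) ∂μ = 1) : u =ᵐ[μ] v := by
  have hint : Integrable (fun x => u x * conj (v x)) μ := by
    refine .of_bound (hu.mul (Complex.continuous_conj.comp_aestronglyMeasurable hv)) 1 ?_
    filter_upwards [hu1, hv1] with x hux hvx
    simp [hux, hvx]
  have hint_re : Integrable (fun x => (u x * conj (v x)).re) μ := hint.re
  have hre_le : ∀ᵐ x ∂μ, (u x * conj (v x)).re ≤ 1 := by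
    filter_upwards [hu1, hv1] with x hux hvx
    exact Complex.re_mul_conj_le_one hux hvx
  have hdefect : ∫ x, (1 - (u x * conj (v x)).re) ∂μ = 0 := by
    have hre : ∫ x, (u x * conj (v x)).re ∂μ = (∫ x, u x * conj (v x) ∂μ).re :=
      integral_re hint
    rw [integral_sub (integrable_const 1) hint_re, integral_const, hre, h]
    simp
  have hre_eq := (integral_eq_zero_iff_of_nonneg_ae (hre_le.mono fun _ hx => sub_nonneg.mpr hx)
    ((integrable_const 1).sub hint_re)).mp hdefect
  filter_upwards [hu1, hv1, hre_eq] with x hux hvx hx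
  exact Complex.eq_of_re_mul_conj_eq_one hux hvx (sub_eq_zero.mp hx).symm

theorem MeasureTheory.MeasurePreserving.integral_comp_of_aestronglyMeasurable {α β E : Type*}
    [MeasurableSpace α] [MeasurableSpace β] [NormedAddCommGroup E] [NormedSpace ℝ E]
    {μ : Measure α} {ν : Measure β} {φ : α → β} (hφ : MeasurePreserving φ μ ν) {F : β → E}
    (hF : AEStronglyMeasurable F ν) : ∫ x, F (φ x) ∂μ = ∫ y, F y ∂ν := by
  rw [← hφ.map_eq] at hF ⊢
  exact (integral_map hφ.measurable.aemeasurable hF).symm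

section Correlation

variable {X G : Type*} [MeasurableSpace X] [Group G] [MulAction G X]

noncomputable def correlation (m : Measure X) (f : X → ℂ) (g : G) : ℂ :=
  ∫ x, f (g • x) * conj (f x) ∂m

variable {m : Measure X} {f : X → ℂ} {g : G} {c : ℂ}

lemma correlation_mul_left_of_ae_eq (hkey : ∀ᵐ x ∂m, f (g • x) = c * f x) {h : G}
    (hh : Measure.QuasiMeasurePreserving (h • ·) m m) :
    correlation m f (g * h) = c * correlation m f h := by
  rw [correlation, correlation, ← integral_const_mul]
  refine integral_congr_ae ?_
  filter_upwards [hh.ae hkey] with x hx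
  rw [mul_smul, hx, mul_assoc]

-- `f x = conj c * f (g • x)` since `|c| = 1`; this moves the shift by `g` onto both factors.
lemma correlation_mul_right_of_ae_eq (hkey : ∀ᵐ x ∂m, f (g • x) = c * f x) (hc : c * conj c = 1)
    (hg : MeasurePreserving (g • ·) m m) (hf : AEStronglyMeasurable f m) {h : G}
    (hh : MeasurePreserving (h • ·) m m) :
    correlation m f (h * g) = c * correlation m f h := by
  have hshift : ∀ᵐ x ∂m, f ((h * g) • x) * conj (f x)
      = c * (f (h • g • x) * conj (f (g • x))) := by
    filter_upwards [hkey] with x hx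
    rw [mul_smul, hx, map_mul]
    linear_combination (-(f (h • g • x) * conj (f x))) * hc
  have hF : AEStronglyMeasurable (fun y => f (h • y) * conj (f y)) m :=
    (hf.comp_measurePreserving hh).mul (Complex.continuous_conj.comp_aestronglyMeasurable hf)
  rw [correlation, integral_congr_ae hshift, integral_const_mul,
    hg.integral_comp_of_aestronglyMeasurable hF, correlation]

end Correlation

/-- Let `θ(g) = ∫ f(g•x) conj(f(x)) dm` where `|f| = 1` a.e. on a
probability space with measure-preserving `G`-action. If `|θ(g)| = 1`, then
`f(g•x) = θ(g) f(x)` a.e., and consequently `θ(gh) = θ(hg) = θ(g)θ(h)` for all `h`. -/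
theorem stmt16 {X : Type*} [MeasurableSpace X] (m : Measure X) [IsProbabilityMeasure m]
    {G : Type*} [Group G] [MulAction G X]
    (hmp : ∀ g : G, MeasurePreserving (fun x : X => g • x) m m)
    (f : X → ℂ) (hf : AEStronglyMeasurable f m)
    (hf1 : ∀ᵐ x ∂m, ‖f x‖ = 1)
    (θ : G → ℂ) (hθ : ∀ g : G, θ g = ∫ x, f (g • x) * (starRingEnd ℂ) (f x) ∂m)
    (g : G) (hg : ‖θ g‖ = 1) :
    (∀ᵐ x ∂m, f (g • x) = θ g * f x) ∧
    (∀ h : G, θ (g * h) = θ g * θ h ∧ θ (h * g) = θ g * θ h) := by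
  obtain rfl : θ = correlation m f := funext hθ
  set c := correlation m f g
  have hc : c * conj c = 1 := by
    rw [Complex.mul_conj, Complex.normSq_eq_norm_sq, hg, one_pow, Complex.ofReal_one]
  have hkey : ∀ᵐ x ∂m, f (g • x) = c * f x := by
    refine ae_eq_of_integral_mul_conj_eq_one (hf.comp_measurePreserving (hmp g))
      (aestronglyMeasurable_const.mul hf) ((hmp g).quasiMeasurePreserving.ae hf1) ?_ ?_
    · filter_upwards [hf1] with x hx
      rw [norm_mul, hx, hg, one_mul]
    · calc ∫ x, f (g • x) * conj (c * f x) ∂m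
          = ∫ x, conj c * (f (g • x) * conj (f x)) ∂m := by
            simp only [map_mul, mul_left_comm]
        _ = conj c * c := integral_const_mul _ _
        _ = 1 := by rw [mul_comm, hc]
  exact ⟨hkey, fun h => ⟨correlation_mul_left_of_ae_eq hkey (hmp h).quasiMeasurePreserving,
    correlation_mul_right_of_ae_eq hkey hc (hmp g) hf (hmp h)⟩⟩
end
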